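/- Let (Ω, 𝔽, μ) be a probability space, 𝒳 a measurable space, X : Ω → 𝒳 measurable, Y : Ω → ℝ integrable, and let γ₀, γ̄, α₀, ᾱ : 𝒳 → ℝ be bounded measurable functions such that γ₀ ∘ X is a version of the conditional expectation of Y given the σ-algebra generated by X. If either ᾱ(X) = α₀(X) μ-almost everywhere or γ̄(X) = γ₀(X) μ-almost everywhere, then ∫ ( α₀(X)·γ̄(X) + ᾱ(X)·(Y − γ̄(X)) ) dμ = ∫ α₀(X)·γ₀(X) dμ. That is, the (Riesz-represented) augmented score has mean equal to the target θ₀ when either nuisance is correctly specified (double robustness), and in particular the Neyman orthogonal score has mean zero at the true nuisances. -/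

import Mathlib

/-!
Because `γ₀ ∘ X` is a version of `E[Y | X]`, the residual `Y - γ₀(X)` is orthogonal to every
bounded function of `X` (pull the bounded factor out of the conditional expectation). If `ᾱ = α₀`
the score is `α₀(X) Y = α₀(X) γ₀(X) + α₀(X) (Y - γ₀(X))`; if `γ̄ = γ₀` it is
`α₀(X) γ₀(X) + ᾱ(X) (Y - γ₀(X))`. Either way the residual term integrates to zero.
-/

open MeasureTheory

theorem integral_mul_sub_condExp_eq_zero {Ω : Type*} {m mΩ : MeasurableSpace Ω} {μ : Measure Ω}
    [IsFiniteMeasure μ] (hm : m ≤ mΩ) {f Y : Ω → ℝ} (hf : StronglyMeasurable[m] f) {C : ℝ}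
    (hf_bound : ∀ᵐ ω ∂μ, ‖f ω‖ ≤ C) (hY : Integrable Y μ) :
    ∫ ω, f ω * (Y ω - μ[Y | m] ω) ∂μ = 0 := by
  have hfY : Integrable (fun ω => f ω * Y ω) μ :=
    hY.bdd_mul (hf.mono hm).aestronglyMeasurable hf_bound
  have hfcY : Integrable (fun ω => f ω * μ[Y | m] ω) μ :=
    integrable_condExp.bdd_mul (hf.mono hm).aestronglyMeasurable hf_bound
  have pull_out : ∫ ω, f ω * Y ω ∂μ = ∫ ω, f ω * μ[Y | m] ω ∂μ := by
    rw [← integral_condExp hm]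
    exact integral_congr_ae (condExp_stronglyMeasurable_mul_of_bound hm hf hY C hf_bound)
  simp_rw [mul_sub]
  rw [integral_sub hfY hfcY, pull_out, sub_self]

theorem double_robustness_general
    {Ω : Type*} [MeasurableSpace Ω] (μ : Measure Ω) [IsProbabilityMeasure μ]
    {𝒳 : Type*} [MeasurableSpace 𝒳]
    (X : Ω → 𝒳) (hX : Measurable X)
    (Y : Ω → ℝ) (hY : Integrable Y μ)
    (γ₀ γbar α₀ αbar : 𝒳 → ℝ)
    (hα₀ : Measurable α₀) (hαbar : Measurable αbar)
    (hα₀b : ∃ Cα₀ : ℝ, ∀ x, |α₀ x| ≤ Cα₀)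
    (hαbarb : ∃ Cα : ℝ, ∀ x, |αbar x| ≤ Cα)
    (hcond : (fun ω => γ₀ (X ω)) =ᵐ[μ] μ[Y | MeasurableSpace.comap X inferInstance])
    (hrobust : ((fun ω => αbar (X ω)) =ᵐ[μ] fun ω => α₀ (X ω))
        ∨ ((fun ω => γbar (X ω)) =ᵐ[μ] fun ω => γ₀ (X ω))) :
    ∫ ω, (α₀ (X ω) * γbar (X ω) + αbar (X ω) * (Y ω - γbar (X ω))) ∂μ
      = ∫ ω, α₀ (X ω) * γ₀ (X ω) ∂μ := by
  obtain ⟨a, ha, ⟨C, haC⟩, hscore⟩ : ∃ a : 𝒳 → ℝ, Measurable a ∧ (∃ C : ℝ, ∀ x, |a x| ≤ C) ∧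
      (fun ω => α₀ (X ω) * γbar (X ω) + αbar (X ω) * (Y ω - γbar (X ω)))
        =ᵐ[μ] fun ω => α₀ (X ω) * γ₀ (X ω) + a (X ω) * (Y ω - γ₀ (X ω)) := by
    rcases hrobust with hα | hγ
    · refine ⟨α₀, hα₀, hα₀b, ?_⟩
      filter_upwards [hα] with ω hω
      rw [hω]; ring
    · refine ⟨αbar, hαbar, hαbarb, ?_⟩
      filter_upwards [hγ] with ω hω
      rw [hω]
  obtain ⟨Cα₀, hCα₀⟩ := hα₀b
  have hγ₀X : Integrable (fun ω => γ₀ (X ω)) μ := integrable_condExp.congr hcond.symm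
  have hα₀γ₀ : Integrable (fun ω => α₀ (X ω) * γ₀ (X ω)) μ :=
    hγ₀X.bdd_mul (hα₀.comp hX).aestronglyMeasurable (ae_of_all _ fun ω => hCα₀ (X ω))
  have haresidual : Integrable (fun ω => a (X ω) * (Y ω - γ₀ (X ω))) μ :=
    (hY.sub hγ₀X).bdd_mul (ha.comp hX).aestronglyMeasurable (ae_of_all _ fun ω => haC (X ω))
  have hresidual : ∫ ω, a (X ω) * (Y ω - γ₀ (X ω)) ∂μ = 0 := by
    rw [← integral_mul_sub_condExp_eq_zero hX.comap_le
      (ha.comp (comap_measurable X)).stronglyMeasurable (ae_of_all _ fun ω => haC (X ω)) hY]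
    refine integral_congr_ae ?_
    filter_upwards [hcond] with ω hω
    rw [← hω, Function.comp_apply]
  rw [integral_congr_ae hscore, integral_add hα₀γ₀ haresidual, hresidual, add_zero]

/-- Double robustness: if either the representer or the regression nuisance is
correctly specified, the augmented score has mean equal to the target
`θ₀ = ∫ α₀(X)·γ₀(X) dμ`. -/
theorem double_robustness
    {Ω : Type*} [MeasurableSpace Ω] (μ : Measure Ω) [IsProbabilityMeasure μ]
    {𝒳 : Type*} [MeasurableSpace 𝒳]
    (X : Ω → 𝒳) (hX : Measurable X)
    (Y : Ω → ℝ) (hY : Integrable Y μ)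
    (γ₀ γbar α₀ αbar : 𝒳 → ℝ)
    (hγ₀ : Measurable γ₀) (hγbar : Measurable γbar)
    (hα₀ : Measurable α₀) (hαbar : Measurable αbar)
    (hγ₀b : ∃ Cγ₀ : ℝ, ∀ x, |γ₀ x| ≤ Cγ₀)
    (hγbarb : ∃ Cγ : ℝ, ∀ x, |γbar x| ≤ Cγ)
    (hα₀b : ∃ Cα₀ : ℝ, ∀ x, |α₀ x| ≤ Cα₀)
    (hαbarb : ∃ Cα : ℝ, ∀ x, |αbar x| ≤ Cα)
    (hcond : (fun ω => γ₀ (X ω)) =ᵐ[μ] μ[Y | MeasurableSpace.comap X inferInstance])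
    (hrobust : ((fun ω => αbar (X ω)) =ᵐ[μ] fun ω => α₀ (X ω))
        ∨ ((fun ω => γbar (X ω)) =ᵐ[μ] fun ω => γ₀ (X ω))) :
    ∫ ω, (α₀ (X ω) * γbar (X ω) + αbar (X ω) * (Y ω - γbar (X ω))) ∂μ
      = ∫ ω, α₀ (X ω) * γ₀ (X ω) ∂μ :=
  double_robustness_general μ X hX Y hY γ₀ γbar α₀ αbar hα₀ hαbar hα₀b hαbarb hcond hrobust
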